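/- Let Λ ∈ P_S(Σ̄) with h_S(Λ) < ∞. Then h_S(Λ) + ∫ u dΛ ≤ 0, and equality holds if and only if Λ ∈ E(M). -/

import Mathlib

open MeasureTheory Filter Topology
open scoped ENNReal NNReal Classical

noncomputable section

/-- A countable Markov system `(K_{i(e)}, w_e, p_e)_{e ∈ E}` on a metric space `K`:
a partition `(K_j)_{j ∈ N}` of `K` into nonempty Borel sets, source and target maps
`i, t : E → N` (`i` surjective), and for each `e ∈ E` Borel maps `w_e` and probability
functions `p_e` (extended by zero outside `K_{i(e)}`) with
`∑_{e, i(e)=j} p_e(y) = 1` for `y ∈ K_j`. -/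
structure MarkovSystem (K : Type*) [MetricSpace K] [MeasurableSpace K]
    (N : Type*) (E : Type*) where
  Kset : N → Set K
  Kset_nonempty : ∀ j, (Kset j).Nonempty
  Kset_measurable : ∀ j, MeasurableSet (Kset j)
  Kset_disjoint : Pairwise (Function.onFun Disjoint Kset)
  Kset_cover : (⋃ j, Kset j) = Set.univ
  i : E → N
  t : E → N
  i_surj : Function.Surjective i
  w : E → K → K
  p : E → K → ℝ
  w_measurable : ∀ e, Measurable (w e)
  p_measurable : ∀ e, Measurable (p e)
  p_nonneg : ∀ e x, 0 ≤ p e x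
  p_le_one : ∀ e x, p e x ≤ 1
  p_zero_outside : ∀ e x, x ∉ Kset (i e) → p e x = 0
  w_mapsTo : ∀ e, Set.MapsTo (w e) (Kset (i e)) (Kset (t e))
  p_pos_somewhere : ∀ e, ∃ x ∈ Kset (i e), 0 < p e x
  p_tsum_one : ∀ j, ∀ x ∈ Kset j, (∑' e : {e : E // i e = j}, p e.val x) = 1

/-- `Ē = E ∪ {∞}` (one-point compactification); with `E` countable its Borel σ-algebra
consists of all subsets. -/
instance optionMeasurableSpace (E : Type*) : MeasurableSpace (Option E) := ⊤

/-- The code space `Σ̄ = Ē^ℤ`, carrying the product σ-algebra. -/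
abbrev CodeSpace (E : Type*) : Type _ := ℤ → Option E

/-- The left shift `S` on the code space, `(Sσ)_{k-1} = σ_k`. -/
def shiftMap (E : Type*) : CodeSpace E → CodeSpace E := fun σ k => σ (k + 1)

/-- The cylinder set `_m[es₀, …, es_{n}] = {σ : σ_{m+k} = es_k}`. -/
def cylSetL {E : Type*} (m : ℤ) (es : List (Option E)) : Set (CodeSpace E) :=
  {σ | ∀ (k : ℕ) (h : k < es.length), σ (m + (k : ℤ)) = es.get ⟨k, h⟩}

/-- The σ-algebra `𝓕` generated by the cylinder sets `_m[e_m, …, e_0]`, `m ≤ 0`. -/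
def pastAlgebra (E : Type*) : MeasurableSpace (CodeSpace E) :=
  MeasurableSpace.generateFrom
    {A | ∃ es : List (Option E), es ≠ [] ∧ A = cylSetL (1 - (es.length : ℤ)) es}

/-- The conditional entropy `h_S(Λ) = H_Λ((_1[e])_{e ∈ Ē} | 𝓕)`. -/
def entropyS {E : Type*} (Λ : Measure (CodeSpace E)) : ℝ≥0∞ :=
  ∑' eo : Option E,
    ∫⁻ σ, ENNReal.ofReal
        (Real.negMulLog
          ((Λ[Set.indicator {τ : CodeSpace E | τ 1 = eo} (fun _ => (1 : ℝ)) | pastAlgebra E]) σ)) ∂Λ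

namespace MarkovSystem

variable {K : Type*} [MetricSpace K] [MeasurableSpace K] {N E : Type*}

/-- The Markov operator `Uf = ∑_e p_e · (f ∘ w_e)` acting on nonnegative Borel functions. -/
def markovOp (M : MarkovSystem K N E) (f : K → ℝ≥0∞) : K → ℝ≥0∞ :=
  fun x => ∑' e : E, ENNReal.ofReal (M.p e x) * f (M.w e x)

/-- The adjoint operator `U*` acting on measures, `(U*ν)(B) = ∫ U(1_B) dν`. -/
def adjOp (M : MarkovSystem K N E) (ν : Measure K) : Measure K :=
  Measure.sum fun e : E =>
    Measure.map (M.w e) (ν.withDensity fun x => ENNReal.ofReal (M.p e x))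

/-- `μ ∈ P(M)`: `μ` is an invariant Borel probability measure, `U*μ = μ`. -/
def IsInvariantMeasure (M : MarkovSystem K N E) (μ : Measure K) : Prop :=
  IsProbabilityMeasure μ ∧ M.adjOp μ = μ

/-- The path space `Σ_G`: all coordinates lie in `E` and `i(σ_{n+1}) = t(σ_n)`. -/
def pathSpace (M : MarkovSystem K N E) : Set (CodeSpace E) :=
  {σ | ∀ n : ℤ, ∃ e e' : E, σ n = some e ∧ σ (n + 1) = some e' ∧ M.i e' = M.t e}

/-- `T_j = {σ ∈ Σ_G : t(σ_0) = j}`. -/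
def Tset (M : MarkovSystem K N E) (j : N) : Set (CodeSpace E) :=
  {σ | σ ∈ M.pathSpace ∧ ∃ e : E, σ 0 = some e ∧ M.t e = j}

/-- `w` extended to `Ē`, with `w_∞ = id`. -/
def wext (M : MarkovSystem K N E) : Option E → K → K := fun o => o.elim id M.w

/-- `p` extended to `Ē`, with `p_∞ = 0`. -/
def pext (M : MarkovSystem K N E) : Option E → K → ℝ := fun o => o.elim (fun _ => 0) M.p

/-- `i` extended to `Ē`, with `i(∞) = j₀`. -/
def iext (M : MarkovSystem K N E) (j0 : N) : Option E → N := fun o => o.elim j0 M.i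

/-- `t` extended to `Ē`, with `t(∞) = j₀`. -/
def text (M : MarkovSystem K N E) (j0 : N) : Option E → N := fun o => o.elim j0 M.t

/-- `iterW M σ n y = w_{σ_0} ∘ w_{σ_{-1}} ∘ ⋯ ∘ w_{σ_{-n}} (y)`. -/
def iterW (M : MarkovSystem K N E) (σ : CodeSpace E) : ℕ → K → K
  | 0, y => M.wext (σ 0) y
  | n + 1, y => M.iterW σ n (M.wext (σ (-(n + 1 : ℤ))) y)

/-- `orbit M j0 xp σ n = w_{σ_0} ∘ ⋯ ∘ w_{σ_{-n}} (x_{i(σ_{-n})})`. -/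
def orbit (M : MarkovSystem K N E) (j0 : N) (xp : N → K) (σ : CodeSpace E) (n : ℕ) : K :=
  M.iterW σ n (xp (M.iext j0 (σ (-(n : ℤ)))))

/-- `D`: the set of `σ ∈ Σ_G` for which `lim_{m → -∞} w_{σ_0} ∘ ⋯ ∘ w_{σ_m}(x_{i(σ_m)})` exists. -/
def codeDomain (M : MarkovSystem K N E) (j0 : N) (xp : N → K) : Set (CodeSpace E) :=
  {σ | σ ∈ M.pathSpace ∧ ∃ l : K, Tendsto (fun n : ℕ => M.orbit j0 xp σ n) atTop (𝓝 l)}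

/-- The coding map `F`: the above limit on `D`, and `x_{t(σ_0)}` elsewhere. -/
def code (M : MarkovSystem K N E) (j0 : N) (xp : N → K) (σ : CodeSpace E) : K :=
  if h : σ ∈ M.codeDomain j0 xp then h.2.choose else xp (M.text j0 (σ 0))

/-- `Λ ∈ E(M)`: `Λ` is a shift-invariant Borel probability measure with `Λ(D) = 1` and
`E_Λ(1_{_1[e]} | 𝓕) = p_e ∘ F` `Λ`-a.e. for every `e ∈ E` (an equilibrium state). -/
def IsEquilibrium (M : MarkovSystem K N E) (j0 : N) (xp : N → K)
    (Λ : Measure (CodeSpace E)) : Prop :=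
  IsProbabilityMeasure Λ ∧ Measure.map (shiftMap E) Λ = Λ ∧
    Λ (M.codeDomain j0 xp) = 1 ∧
    ∀ e : E,
      (Λ[Set.indicator {σ : CodeSpace E | σ 1 = some e} (fun _ => (1 : ℝ)) | pastAlgebra E])
        =ᵐ[Λ] fun σ => M.p e (M.code j0 xp σ)

/-- `pbar` is the family of continuous extensions `p̄_e` of `p_e|_{K_{i(e)}}` to the closure
of `K_{i(e)}`, extended further by zero on `K`. -/
def IsUCExtensionP (M : MarkovSystem K N E) (pbar : E → K → ℝ) : Prop :=
  ∀ e : E, ContinuousOn (pbar e) (closure (M.Kset (M.i e))) ∧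
    (∀ x ∈ M.Kset (M.i e), pbar e x = M.p e x) ∧
    (∀ x, x ∉ closure (M.Kset (M.i e)) → pbar e x = 0)

/-- `wb` is a family of continuous extensions `w̄_e` of `w_e|_{K_{i(e)}}` to the closure
of `K_{i(e)}`. -/
def IsUCExtensionW (M : MarkovSystem K N E) (wb : E → K → K) : Prop :=
  ∀ e : E, ContinuousOn (wb e) (closure (M.Kset (M.i e))) ∧
    (∀ x ∈ M.Kset (M.i e), wb e x = M.w e x)

/-- The Markov system is uniformly continuous: each `w_e|_{K_{i(e)}}` and `p_e|_{K_{i(e)}}`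
is uniformly continuous. -/
def IsUniformlyContinuous (M : MarkovSystem K N E) : Prop :=
  ∀ e : E, UniformContinuousOn (M.w e) (M.Kset (M.i e)) ∧
    UniformContinuousOn (M.p e) (M.Kset (M.i e))

/-- `∂p_e = p̄_e · 1_{cl(K_{i(e)}) \ K_{i(e)}}`. -/
def dp (M : MarkovSystem K N E) (pbar : E → K → ℝ) (e : E) : K → ℝ :=
  Set.indicator (closure (M.Kset (M.i e)) \ M.Kset (M.i e)) (pbar e)

/-- `Λ ∈ Ẽ(M)` (asymptotic state): shift-invariant probability with `Λ(D) = 1` and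
`E_Λ(1_{_1[e]} | 𝓕) = (p̄_e ∘ F)·1_{T_{i(e)}}` `Λ`-a.e. for every `e`. -/
def IsAsymptotic (M : MarkovSystem K N E) (j0 : N) (xp : N → K) (pbar : E → K → ℝ)
    (Λ : Measure (CodeSpace E)) : Prop :=
  IsProbabilityMeasure Λ ∧ Measure.map (shiftMap E) Λ = Λ ∧
    Λ (M.codeDomain j0 xp) = 1 ∧
    ∀ e : E,
      (Λ[Set.indicator {σ : CodeSpace E | σ 1 = some e} (fun _ => (1 : ℝ)) | pastAlgebra E])
        =ᵐ[Λ] Set.indicator (M.Tset (M.i e)) (fun σ => pbar e (M.code j0 xp σ))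

/-- `Λ ∈ E_⊥(M)`: shift-invariant probability with `Λ(D) = 1` and
`E_Λ(1_{_1[e]} | 𝓕) = (∂p_e ∘ F)·1_{T_{i(e)}}` `Λ`-a.e. for every `e`. -/
def IsPerp (M : MarkovSystem K N E) (j0 : N) (xp : N → K) (pbar : E → K → ℝ)
    (Λ : Measure (CodeSpace E)) : Prop :=
  IsProbabilityMeasure Λ ∧ Measure.map (shiftMap E) Λ = Λ ∧
    Λ (M.codeDomain j0 xp) = 1 ∧
    ∀ e : E,
      (Λ[Set.indicator {σ : CodeSpace E | σ 1 = some e} (fun _ => (1 : ℝ)) | pastAlgebra E])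
        =ᵐ[Λ] Set.indicator (M.Tset (M.i e)) (fun σ => M.dp pbar e (M.code j0 xp σ))

/-- `G = ⋃_{k ≥ 0} ⋃_{j ∈ N} S^{-k}(F^{-1}(K_j) ∩ T_j)`. -/
def Gset (M : MarkovSystem K N E) (j0 : N) (xp : N → K) : Set (CodeSpace E) :=
  ⋃ (k : ℕ) (j : N), (shiftMap E)^[k] ⁻¹' ((M.code j0 xp) ⁻¹' (M.Kset j) ∩ M.Tset j)

/-- `M` is non-degenerate: for every asymptotic state `Λ` there is `i ∈ N` with
`Λ(T_i ∩ F^{-1}(K_i)) > 0`. -/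
def IsNonDegenerate (M : MarkovSystem K N E) (j0 : N) (xp : N → K) (pbar : E → K → ℝ) : Prop :=
  ∀ Λ : Measure (CodeSpace E), M.IsAsymptotic j0 xp pbar Λ →
    ∃ i : N, 0 < Λ (M.Tset i ∩ (M.code j0 xp) ⁻¹' (M.Kset i))

/-- `M` is consistent: `F(Λ) ∈ P(M)` for every asymptotic state `Λ`. -/
def IsConsistent (M : MarkovSystem K N E) (j0 : N) (xp : N → K) (pbar : E → K → ℝ) : Prop :=
  ∀ Λ : Measure (CodeSpace E), M.IsAsymptotic j0 xp pbar Λ →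
    M.IsInvariantMeasure (Measure.map (M.code j0 xp) Λ)

/-- `Rf = ∑_e ∂p_e · (f ∘ w̄_e)`. -/
def Rop (M : MarkovSystem K N E) (pbar : E → K → ℝ) (wb : E → K → K)
    (f : K → ℝ≥0∞) : K → ℝ≥0∞ :=
  fun x => ∑' e : E, ENNReal.ofReal (M.dp pbar e x) * f (wb e x)

/-- `Ω = ⋂_{n ≥ 1} {R^n 1 ≥ 1}`. -/
def OmegaSet (M : MarkovSystem K N E) (pbar : E → K → ℝ) (wb : E → K → K) : Set K :=
  ⋂ n : ℕ, {x : K | 1 ≤ (M.Rop pbar wb)^[n + 1] (fun _ => 1) x}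

/-- `ξ_j = ∑_{e, i(e) = j} sup_{x ∈ K_j} p_e(x)`. -/
def xi (M : MarkovSystem K N E) (j : N) : ℝ≥0∞ :=
  ∑' e : {e : E // M.i e = j}, ⨆ x ∈ M.Kset j, ENNReal.ofReal (M.p e.val x)

/-- `M` has a dominating Markov chain: `ξ_j < ∞` for all `j ∈ N`. -/
def HasDominatingChain (M : MarkovSystem K N E) : Prop := ∀ j : N, M.xi j ≠ ⊤

/-- `ξ_j · q_{j j'} = ∑_{e, i(e) = j, t(e) = j'} sup_{x ∈ K_j} p_e(x)`. -/
def xiq (M : MarkovSystem K N E) (j j' : N) : ℝ≥0∞ :=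
  ∑' e : {e : E // M.i e = j ∧ M.t e = j'}, ⨆ x ∈ M.Kset j, ENNReal.ofReal (M.p e.val x)

/-- `c = ∑_{j'} sup_j ξ_j q_{j j'}`. -/
def cConst (M : MarkovSystem K N E) : ℝ≥0∞ := ∑' j' : N, ⨆ j : N, M.xiq j j'

/-- `α^{x_0}_n({j}) = (1/n) ∑_{k=1}^n ((U*)^k δ_{x_0})(K_j)`. -/
def alphaMeas (M : MarkovSystem K N E) (x0 : K) (n : ℕ) (j : N) : ℝ≥0∞ :=
  (n : ℝ≥0∞)⁻¹ * ∑ k ∈ Finset.range n, (M.adjOp^[k + 1] (Measure.dirac x0)) (M.Kset j)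

/-- Condition (T) at `x_0`: the sequence `(α^{x_0}_n)_n` is uniformly tight. -/
def ConditionT (M : MarkovSystem K N E) (x0 : K) : Prop :=
  ∀ ε : ℝ, 0 < ε → ∃ V : Finset N,
    ∀ n : ℕ, (∑' j : {j : N // j ∉ V}, M.alphaMeas x0 (n + 1) j.val) < ENNReal.ofReal ε

/-- `M` is contractive with contraction rate `a`:
`∑_{e, i(e) = j} p_e(x) d(w_e x, w_e y) ≤ a·d(x, y)` on each `K_j`. -/
def IsContractive (M : MarkovSystem K N E) (a : ℝ) : Prop :=
  ∀ j : N, ∀ x ∈ M.Kset j, ∀ y ∈ M.Kset j,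
    (∑' e : {e : E // M.i e = j},
        ENNReal.ofReal (M.p e.val x * dist (M.w e.val x) (M.w e.val y)))
      ≤ ENNReal.ofReal (a * dist x y)

/-- `L(x) = ∑_j d(x, x_j)·1_{K_j}(x)`. -/
def Lfun (M : MarkovSystem K N E) (xp : N → K) : K → ℝ≥0∞ :=
  fun x => ∑' j : N, Set.indicator (M.Kset j) (fun y => ENNReal.ofReal (dist y (xp j))) x

/-- `b = sup_j sup_{x ∈ K_j} ∑_{e, i(e) = j} p_e(x)·d(w_e(x_{i(e)}), x_{t(e)})`. -/
def bConst (M : MarkovSystem K N E) (xp : N → K) : ℝ≥0∞ :=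
  ⨆ j : N, ⨆ x ∈ M.Kset j,
    ∑' e : {e : E // M.i e = j},
      ENNReal.ofReal (M.p e.val x * dist (M.w e.val (xp (M.i e.val))) (xp (M.t e.val)))

/-- `P^m_x` evaluated on a word: `p_{e_0}(x)·p_{e_1}(w_{e_0}x)·⋯`. -/
def wordProb (M : MarkovSystem K N E) : List (Option E) → K → ℝ
  | [], _ => 1
  | o :: rest, x => M.pext o x * M.wordProb rest (M.wext o x)

/-- `Λ = Φ(μ)`: `Λ` is a shift-invariant Borel probability measure with
`Λ(_m[e_m, …, e_n]) = ∫ P^m_x(_m[e_m, …, e_n]) dμ(x)` for all cylinders with `m ≤ 0`. -/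
def IsPhiOf (M : MarkovSystem K N E) (μ : Measure K) (Λ : Measure (CodeSpace E)) : Prop :=
  IsProbabilityMeasure Λ ∧ Measure.map (shiftMap E) Λ = Λ ∧
    ∀ m : ℤ, m ≤ 0 → ∀ es : List (Option E),
      Λ (cylSetL m es) = ∫⁻ x, ENNReal.ofReal (M.wordProb es x) ∂μ

/-- The (negative of the) energy function: `-u(σ) = -log p_{σ_1}(F(σ))` on `D`
(`+∞` if `p_{σ_1}(F(σ)) = 0`) and `+∞` off `D`, valued in `[0, ∞]`. -/
def negEnergy (M : MarkovSystem K N E) (j0 : N) (xp : N → K) (σ : CodeSpace E) : ℝ≥0∞ :=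
  if σ ∈ M.codeDomain j0 xp then
    (σ 1).elim ⊤ fun e =>
      if M.p e (M.code j0 xp σ) = 0 then ⊤
      else ENNReal.ofReal (-Real.log (M.p e (M.code j0 xp σ)))
  else ⊤

/-- The free energy `h_S(Λ) + ∫ u dΛ`, as an extended real number. -/
def freeEnergy (M : MarkovSystem K N E) (j0 : N) (xp : N → K)
    (Λ : Measure (CodeSpace E)) : EReal :=
  (entropyS Λ : EReal) - ((∫⁻ σ, M.negEnergy j0 xp σ ∂Λ : ℝ≥0∞) : EReal)

/-- `Λ₀ ∈ E(u)`: `Λ₀` is a thermodynamic equilibrium state for the energy function `u`. -/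
def IsEquilibriumForU (M : MarkovSystem K N E) (j0 : N) (xp : N → K)
    (Λ0 : Measure (CodeSpace E)) : Prop :=
  IsProbabilityMeasure Λ0 ∧ Measure.map (shiftMap E) Λ0 = Λ0 ∧ entropyS Λ0 ≠ ⊤ ∧
    M.freeEnergy j0 xp Λ0 =
      sSup {r : EReal | ∃ Λ : Measure (CodeSpace E),
        IsProbabilityMeasure Λ ∧ Measure.map (shiftMap E) Λ = Λ ∧ entropyS Λ ≠ ⊤ ∧
          r = M.freeEnergy j0 xp Λ}

end MarkovSystem

end

/-!
Write `g_e = E_Λ(1_{_1[e]} | 𝓕)`. If `Λ(D) = 1`, the coding map agrees `Λ`-a.e. with an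
`𝓕`-measurable map `G`, the a.e. limit of the orbits (each orbit point depends on finitely many
past coordinates only). Hence `p_e ∘ F` can be pulled out of conditional expectations, and
`h_S(Λ) = ∫ ∑_e -g_e log g_e dΛ`, `∫ -u dΛ = ∫ ∑_e -g_e log (p_e ∘ G) dΛ`. Gibbs' inequality for
the probability vectors `(g_e)_e` and `(p_e ∘ G)_e`, pointwise, gives the inequality, and when the
integrals are finite, equality forces `g_e = p_e ∘ G` a.e., i.e. `Λ ∈ E(M)`. If `Λ(D) < 1`, then
`-u = ∞` on a set of positive measure.
-/

section Gibbs

variable {ι : Type*}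

/-- `-log b` in `ℝ≥0∞`, equal to `∞` at `b = 0` (whereas `Real.log 0 = 0`). -/
noncomputable def ennNegLog (b : ℝ) : ℝ≥0∞ := if b = 0 then ⊤ else ENNReal.ofReal (-Real.log b)

lemma measurable_ennNegLog : Measurable ennNegLog :=
  Measurable.ite (measurableSet_singleton 0) measurable_const
    (ENNReal.measurable_ofReal.comp Real.measurable_log.neg)

def IsProbWeights (a : ι → ℝ) : Prop := (∀ i, 0 ≤ a i) ∧ ∑' i, ENNReal.ofReal (a i) = 1

noncomputable def discreteEntropy (a : ι → ℝ) : ℝ≥0∞ :=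
  ∑' i, ENNReal.ofReal (Real.negMulLog (a i))

noncomputable def discreteCrossEntropy (a b : ι → ℝ) : ℝ≥0∞ :=
  ∑' i, ENNReal.ofReal (a i) * ennNegLog (b i)

lemma IsProbWeights.le_one {a : ι → ℝ} (ha : IsProbWeights a) (i : ι) : a i ≤ 1 :=
  ENNReal.ofReal_le_one.1 (ha.2 ▸ ENNReal.le_tsum i)

lemma mul_neg_log_add_eq_negMulLog_add {a b : ℝ} (hb : 0 < b) :
    a * -Real.log b + b = Real.negMulLog a + a + b * InformationTheory.klFun (a / b) := by
  rcases eq_or_ne a 0 with rfl | ha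
  · simp [InformationTheory.klFun_zero]
  · rw [InformationTheory.klFun, Real.log_div ha hb.ne', Real.negMulLog]
    field_simp
    ring

lemma ofReal_mul_ennNegLog_add_eq {a b : ℝ} (ha0 : 0 ≤ a) (ha1 : a ≤ 1) (hb0 : 0 < b)
    (hb1 : b ≤ 1) :
    ENNReal.ofReal a * ennNegLog b + ENNReal.ofReal b
      = ENNReal.ofReal (Real.negMulLog a) + ENNReal.ofReal a
        + ENNReal.ofReal (b * InformationTheory.klFun (a / b)) := by
  have hkl : 0 ≤ b * InformationTheory.klFun (a / b) :=
    mul_nonneg hb0.le (InformationTheory.klFun_nonneg (by positivity))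
  rw [ennNegLog, if_neg hb0.ne', ← ENNReal.ofReal_mul ha0,
    ← ENNReal.ofReal_add (mul_nonneg ha0 (neg_nonneg.2 (Real.log_nonpos hb0.le hb1))) hb0.le,
    ← ENNReal.ofReal_add (Real.negMulLog_nonneg ha0 ha1) ha0,
    ← ENNReal.ofReal_add (add_nonneg (Real.negMulLog_nonneg ha0 ha1) ha0) hkl,
    mul_neg_log_add_eq_negMulLog_add hb0]

lemma ofReal_negMulLog_add_le {a b : ℝ} (ha0 : 0 ≤ a) (ha1 : a ≤ 1) (hb0 : 0 ≤ b) (hb1 : b ≤ 1) :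
    ENNReal.ofReal (Real.negMulLog a) + ENNReal.ofReal a
      ≤ ENNReal.ofReal a * ennNegLog b + ENNReal.ofReal b := by
  rcases hb0.eq_or_lt with rfl | hb
  · rcases ha0.eq_or_lt with rfl | ha
    · simp
    · simp [ennNegLog, ENNReal.mul_top (ENNReal.ofReal_pos.2 ha).ne']
  rw [ofReal_mul_ennNegLog_add_eq ha0 ha1 hb hb1]
  exact le_self_add

lemma eq_of_ofReal_negMulLog_add_eq {a b : ℝ} (ha0 : 0 ≤ a) (ha1 : a ≤ 1) (hb0 : 0 ≤ b)
    (hb1 : b ≤ 1) (hfin : ENNReal.ofReal a * ennNegLog b ≠ ⊤)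
    (heq : ENNReal.ofReal (Real.negMulLog a) + ENNReal.ofReal a
      = ENNReal.ofReal a * ennNegLog b + ENNReal.ofReal b) : a = b := by
  rcases hb0.eq_or_lt with rfl | hb
  · by_contra ha
    exact hfin (by simp [ennNegLog, ENNReal.mul_top (ENNReal.ofReal_pos.2 (ha0.lt_of_ne' ha)).ne'])
  rw [ofReal_mul_ennNegLog_add_eq ha0 ha1 hb hb1] at heq
  have hkl : b * InformationTheory.klFun (a / b) = 0 := by
    have h0 := (ENNReal.add_right_inj (by finiteness)).1 ((add_zero _).trans heq)
    exact le_antisymm (ENNReal.ofReal_eq_zero.1 h0.symm)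
      (mul_nonneg hb.le (InformationTheory.klFun_nonneg (by positivity)))
  have := (InformationTheory.klFun_eq_zero_iff (by positivity)).1
    ((mul_eq_zero.1 hkl).resolve_left hb.ne')
  exact (div_eq_one_iff_eq hb.ne').1 this

lemma ofReal_mul_ennNegLog_self {a : ℝ} (ha : 0 ≤ a) :
    ENNReal.ofReal a * ennNegLog a = ENNReal.ofReal (Real.negMulLog a) := by
  rcases ha.eq_or_lt with rfl | ha
  · simp
  · rw [ennNegLog, if_neg ha.ne', ← ENNReal.ofReal_mul ha.le, Real.negMulLog, neg_mul, mul_neg]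

variable {a b : ι → ℝ}

lemma discreteCrossEntropy_self (ha : ∀ i, 0 ≤ a i) :
    discreteCrossEntropy a a = discreteEntropy a :=
  tsum_congr fun i => ofReal_mul_ennNegLog_self (ha i)

theorem discreteEntropy_le_discreteCrossEntropy (ha : IsProbWeights a) (hb : IsProbWeights b) :
    discreteEntropy a ≤ discreteCrossEntropy a b := by
  have h := ENNReal.tsum_le_tsum fun i =>
    ofReal_negMulLog_add_le (ha.1 i) (ha.le_one i) (hb.1 i) (hb.le_one i)
  rw [ENNReal.tsum_add, ENNReal.tsum_add, ha.2, hb.2] at h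
  exact (ENNReal.add_le_add_iff_right ENNReal.one_ne_top).1 h

theorem eq_of_discreteEntropy_eq_discreteCrossEntropy (ha : IsProbWeights a)
    (hb : IsProbWeights b) (hfin : discreteCrossEntropy a b ≠ ⊤)
    (heq : discreteEntropy a = discreteCrossEntropy a b) : a = b := by
  have hsum : ∑' i, (ENNReal.ofReal (Real.negMulLog (a i)) + ENNReal.ofReal (a i))
      = ∑' i, (ENNReal.ofReal (a i) * ennNegLog (b i) + ENNReal.ofReal (b i)) := by
    rw [ENNReal.tsum_add, ENNReal.tsum_add, ha.2, hb.2]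
    exact congrArg (· + 1) heq
  have hsum_fin : ∑' i, (ENNReal.ofReal (a i) * ennNegLog (b i) + ENNReal.ofReal (b i)) ≠ ⊤ := by
    rw [ENNReal.tsum_add, hb.2]
    exact ENNReal.add_ne_top.2 ⟨hfin, ENNReal.one_ne_top⟩
  funext i
  have hle : ∀ j, ENNReal.ofReal (Real.negMulLog (a j)) + ENNReal.ofReal (a j)
      ≤ ENNReal.ofReal (a j) * ennNegLog (b j) + ENNReal.ofReal (b j) := fun j =>
    ofReal_negMulLog_add_le (ha.1 j) (ha.le_one j) (hb.1 j) (hb.le_one j)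
  refine eq_of_ofReal_negMulLog_add_eq (ha.1 i) (ha.le_one i) (hb.1 i) (hb.le_one i) ?_ ?_
  · exact ne_top_of_le_ne_top hfin (ENNReal.le_tsum (f := fun j => _ * ennNegLog (b j)) i)
  · by_contra hne
    exact (ENNReal.tsum_lt_tsum (hsum ▸ hsum_fin) hle ((hle i).lt_of_ne hne)).ne hsum

lemma measurable_discreteCrossEntropy [Countable ι] {Ω : Type*} [MeasurableSpace Ω]
    {a b : Ω → ι → ℝ} (ha : ∀ i, Measurable fun x => a x i) (hb : ∀ i, Measurable fun x => b x i) :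
    Measurable fun x => discreteCrossEntropy (a x) (b x) :=
  Measurable.tsum fun i => (ha i).ennreal_ofReal.mul (measurable_ennNegLog.comp (hb i))

section Integrated

variable {Ω : Type*} [MeasurableSpace Ω] {μ : Measure Ω} {a b : Ω → ι → ℝ}

theorem lintegral_discreteEntropy_le (ha : ∀ᵐ x ∂μ, IsProbWeights (a x))
    (hb : ∀ᵐ x ∂μ, IsProbWeights (b x)) :
    ∫⁻ x, discreteEntropy (a x) ∂μ ≤ ∫⁻ x, discreteCrossEntropy (a x) (b x) ∂μ :=
  lintegral_mono_ae <| by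
    filter_upwards [ha, hb] with x hax hbx
    exact discreteEntropy_le_discreteCrossEntropy hax hbx

theorem lintegral_discreteEntropy_eq_iff [Countable ι] (ha : ∀ᵐ x ∂μ, IsProbWeights (a x))
    (hb : ∀ᵐ x ∂μ, IsProbWeights (b x)) (ham : ∀ i, Measurable fun x => a x i)
    (hbm : ∀ i, Measurable fun x => b x i) (hfin : ∫⁻ x, discreteEntropy (a x) ∂μ ≠ ⊤) :
    ∫⁻ x, discreteEntropy (a x) ∂μ = ∫⁻ x, discreteCrossEntropy (a x) (b x) ∂μ ↔
      ∀ᵐ x ∂μ, a x = b x := by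
  have hmeas := (measurable_discreteCrossEntropy ham hbm).aemeasurable (μ := μ)
  constructor
  · intro heq
    have hae := ae_eq_of_ae_le_of_lintegral_le
      (by filter_upwards [ha, hb] with x hax hbx
          exact discreteEntropy_le_discreteCrossEntropy hax hbx) hfin hmeas heq.ge
    filter_upwards [ha, hb, hae, ae_lt_top' hmeas (heq ▸ hfin)] with x hax hbx hx hlt
    exact eq_of_discreteEntropy_eq_discreteCrossEntropy hax hbx hlt.ne hx
  · intro hab
    refine lintegral_congr_ae ?_
    filter_upwards [ha, hab] with x hax hx
    rw [hx, discreteCrossEntropy_self (hx ▸ hax.1)]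

end Integrated

end Gibbs

section CondExpIndicator

variable {Ω : Type*} {m m0 : MeasurableSpace Ω} {μ : Measure Ω} {s : Set Ω}

lemma measurable_ofReal_condExp :
    Measurable[m] fun x => ENNReal.ofReal ((μ[s.indicator (fun _ => (1 : ℝ)) | m]) x) :=
  ENNReal.measurable_ofReal.comp stronglyMeasurable_condExp.measurable

lemma condExp_indicator_one_nonneg : 0 ≤ᵐ[μ] μ[s.indicator (fun _ => (1 : ℝ)) | m] :=
  condExp_nonneg (.of_forall (Set.indicator_nonneg fun _ _ => zero_le_one))

variable [IsFiniteMeasure μ]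

lemma setLIntegral_ofReal_condExp_indicator (hm : m ≤ m0) (hs : MeasurableSet s) {A : Set Ω}
    (hA : MeasurableSet[m] A) :
    ∫⁻ x in A, ENNReal.ofReal ((μ[s.indicator (fun _ => (1 : ℝ)) | m]) x) ∂μ = μ (A ∩ s) := by
  have hint : Integrable (s.indicator fun _ => (1 : ℝ)) μ := (integrable_const 1).indicator hs
  rw [← ofReal_integral_eq_lintegral_ofReal integrable_condExp.integrableOn
      (ae_restrict_of_ae condExp_indicator_one_nonneg),
    setIntegral_condExp hm hint hA, setIntegral_indicator hs, setIntegral_const, smul_eq_mul,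
    mul_one, ofReal_measureReal]

theorem setLIntegral_eq_lintegral_ofReal_condExp_mul (hm : m ≤ m0) (hs : MeasurableSet s)
    {h : Ω → ℝ≥0∞} (hh : Measurable[m] h) :
    ∫⁻ x in s, h x ∂μ
      = ∫⁻ x, ENNReal.ofReal ((μ[s.indicator (fun _ => (1 : ℝ)) | m]) x) * h x ∂μ := by
  set g := fun x => ENNReal.ofReal ((μ[s.indicator (fun _ => (1 : ℝ)) | m]) x)
  have htrim : (μ.restrict s).trim hm = (μ.withDensity g).trim hm := by
    refine @Measure.ext _ m _ _ fun A hA => ?_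
    rw [trim_measurableSet_eq hm hA, trim_measurableSet_eq hm hA, withDensity_apply _ (hm A hA),
      setLIntegral_ofReal_condExp_indicator hm hs hA, Measure.restrict_apply (hm A hA)]
  rw [← lintegral_trim hm hh, htrim, lintegral_trim hm hh,
    lintegral_withDensity_eq_lintegral_mul _ (measurable_ofReal_condExp.mono hm le_rfl)
      (hh.mono hm le_rfl)]
  rfl

theorem ae_tsum_ofReal_condExp_indicator_eq_one (hm : m ≤ m0) {ι : Type*} [Countable ι]
    {c : Ω → ι} (hc : ∀ i, MeasurableSet {x | c x = i}) :
    ∀ᵐ x ∂μ, ∑' i, ENNReal.ofReal ((μ[{y | c y = i}.indicator (fun _ => (1 : ℝ)) | m]) x) = 1 := by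
  have hsum : Measurable[m]
      fun x => ∑' i, ENNReal.ofReal ((μ[{y | c y = i}.indicator (fun _ => (1 : ℝ)) | m]) x) := by
    let _ : MeasurableSpace Ω := m
    exact Measurable.tsum fun _ => measurable_ofReal_condExp
  refine ae_eq_of_ae_eq_trim (hm := hm) <|
    ae_eq_of_forall_setLIntegral_eq_of_sigmaFinite hsum measurable_const fun A hA _ => ?_
  rw [setLIntegral_trim hm hsum hA, setLIntegral_trim hm measurable_const hA,
    lintegral_tsum fun i => (measurable_ofReal_condExp.mono hm le_rfl).aemeasurable.restrict]
  simp_rw [setLIntegral_ofReal_condExp_indicator hm (hc _) hA]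
  have hdisj : Pairwise (Function.onFun Disjoint fun i => A ∩ {y | c y = i}) := fun i j hij =>
    (pairwise_disjoint_fiber c hij).mono Set.inter_subset_right Set.inter_subset_right
  rw [setLIntegral_one, ← measure_iUnion hdisj fun i => (hm A hA).inter (hc i),
    ← Set.inter_iUnion, Set.iUnion_eq_univ_iff.2 fun x => ⟨c x, rfl⟩, Set.inter_univ]

end CondExpIndicator

instance (E : Type*) : DiscreteMeasurableSpace (Option E) := ⟨fun _ => trivial⟩

section PastAlgebra

variable {E : Type*}

lemma measurableSet_cylSetL (m : ℤ) (es : List (Option E)) : MeasurableSet (cylSetL m es) := by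
  have : cylSetL m es = ⋂ (k : ℕ) (h : k < es.length), {σ | σ (m + k) = es.get ⟨k, h⟩} := by
    ext σ
    simp [cylSetL]
  rw [this]
  exact .iInter fun k => .iInter fun _ => measurable_pi_apply _ (measurableSet_singleton _)

lemma pastAlgebra_le : pastAlgebra E ≤ MeasurableSpace.pi := by
  refine MeasurableSpace.generateFrom_le ?_
  rintro _ ⟨es, -, rfl⟩
  exact measurableSet_cylSetL _ _

variable [Countable E]

lemma measurableSet_pastAlgebra_coord_eq {j : ℤ} (hj : j ≤ 0) (eo : Option E) :
    MeasurableSet[pastAlgebra E] {σ : CodeSpace E | σ j = eo} := by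
  obtain ⟨n, rfl⟩ : ∃ n : ℕ, j = -n := ⟨j.natAbs, by omega⟩
  have : {σ : CodeSpace E | σ (-n) = eo} = ⋃ es : Fin n → Option E,
      cylSetL (1 - ((eo :: List.ofFn es).length : ℤ)) (eo :: List.ofFn es) := by
    ext σ
    simp only [Set.mem_ofPred_eq, Set.mem_iUnion, cylSetL, List.length_cons, List.length_ofFn]
    push_cast
    constructor
    · intro h
      refine ⟨fun k => σ (-n + (k + 1)), fun k hk => ?_⟩
      cases k with
      | zero => simpa using h
      | succ k => simp
    · rintro ⟨es, h⟩
      simpa using h 0 (Nat.succ_pos _)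
  rw [this]
  exact .iUnion fun es => MeasurableSpace.measurableSet_generateFrom ⟨_, List.cons_ne_nil _ _, rfl⟩

lemma measurable_pastAlgebra_coord {j : ℤ} (hj : j ≤ 0) :
    Measurable[pastAlgebra E] fun σ : CodeSpace E => σ j :=
  @measurable_to_countable' _ _ _ _ (pastAlgebra E) _ (measurableSet_pastAlgebra_coord_eq hj)

theorem measurable_pastAlgebra_of_dependsOn {γ : Type*} [MeasurableSpace γ]
    {f : CodeSpace E → γ} {s : Set ℤ} (hs : s.Finite) (hs0 : s ⊆ Set.Iic 0)
    (hf : DependsOn f s) : Measurable[pastAlgebra E] f := by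
  have : Nonempty γ := ⟨f fun _ => none⟩
  obtain ⟨g, rfl⟩ := dependsOn_iff_exists_comp.1 hf
  have := hs.to_subtype
  exact (measurable_of_countable g).comp <|
    @measurable_pi_lambda _ _ _ (pastAlgebra E) _ _ fun i => measurable_pastAlgebra_coord (hs0 i.2)

end PastAlgebra

lemma tsum_some_eq_tsum_of_none_eq_zero {α M : Type*} [AddCommMonoid M] [TopologicalSpace M]
    {f : Option α → M} (h : f none = 0) : ∑' a, f (some a) = ∑' o, f o :=
  (Option.some_injective α).tsum_eq fun o ho => by
    cases o with
    | none => exact absurd h ho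
    | some a => exact ⟨a, rfl⟩

section PastCondProb

variable {E : Type*} {Λ : Measure (CodeSpace E)}

lemma measurableSet_coord_one_eq (eo : Option E) : MeasurableSet {τ : CodeSpace E | τ 1 = eo} :=
  (measurableSet_singleton eo).preimage (measurable_pi_apply 1)

noncomputable def pastCondProb (Λ : Measure (CodeSpace E)) (eo : Option E) : CodeSpace E → ℝ :=
  Λ[{τ : CodeSpace E | τ 1 = eo}.indicator (fun _ => (1 : ℝ)) | pastAlgebra E]

lemma measurable_pastCondProb (eo : Option E) : Measurable (pastCondProb Λ eo) :=
  (stronglyMeasurable_condExp.mono pastAlgebra_le).measurable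

lemma pastCondProb_none_ae_eq_zero (hnone : Λ {τ | τ 1 = none} = 0) :
    pastCondProb Λ none =ᵐ[Λ] 0 := by
  have hind : {τ : CodeSpace E | τ 1 = none}.indicator (fun _ => (1 : ℝ))
      =ᵐ[Λ] (0 : CodeSpace E → ℝ) := by
    filter_upwards [measure_eq_zero_iff_ae_notMem.1 hnone] with σ hσ
    exact Set.indicator_of_notMem hσ (fun _ => (1 : ℝ))
  refine (condExp_congr_ae hind).trans ?_
  rw [condExp_zero]

variable [Countable E]

lemma ae_isProbWeights_pastCondProb [IsProbabilityMeasure Λ]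
    (hnone : Λ {τ | τ 1 = none} = 0) :
    ∀ᵐ σ ∂Λ, IsProbWeights fun e : E => pastCondProb Λ (some e) σ := by
  have hnonneg : ∀ᵐ σ ∂Λ, ∀ e : E, 0 ≤ pastCondProb Λ (some e) σ :=
    ae_all_iff.2 fun _ => condExp_indicator_one_nonneg
  filter_upwards [hnonneg, pastCondProb_none_ae_eq_zero hnone,
    ae_tsum_ofReal_condExp_indicator_eq_one pastAlgebra_le measurableSet_coord_one_eq]
    with σ hσ hσnone hsum
  refine ⟨hσ, ?_⟩
  rw [tsum_some_eq_tsum_of_none_eq_zero (f := fun eo => ENNReal.ofReal (pastCondProb Λ eo σ))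
    (by simp [hσnone])]
  exact hsum

theorem entropyS_eq_lintegral_discreteEntropy (hnone : Λ {τ | τ 1 = none} = 0) :
    entropyS Λ = ∫⁻ σ, discreteEntropy (fun e : E => pastCondProb Λ (some e) σ) ∂Λ := by
  have hm : ∀ eo, Measurable fun σ => ENNReal.ofReal (Real.negMulLog (pastCondProb Λ eo σ)) :=
    fun eo => ENNReal.measurable_ofReal.comp
      (Real.continuous_negMulLog.measurable.comp (measurable_pastCondProb eo))
  have hzero : ∫⁻ σ, ENNReal.ofReal (Real.negMulLog (pastCondProb Λ none σ)) ∂Λ = 0 := by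
    rw [lintegral_congr_ae (g := fun _ => 0) ?_, lintegral_zero]
    filter_upwards [pastCondProb_none_ae_eq_zero hnone] with σ hσ
    simp [hσ]
  simp only [discreteEntropy]
  rw [lintegral_tsum fun e => (hm (some e)).aemeasurable,
    tsum_some_eq_tsum_of_none_eq_zero
      (f := fun eo => ∫⁻ σ, ENNReal.ofReal (Real.negMulLog (pastCondProb Λ eo σ)) ∂Λ) hzero]
  rfl

end PastCondProb

namespace MarkovSystem

variable {K : Type*} [MetricSpace K] [MeasurableSpace K] {N E : Type*}
  (M : MarkovSystem K N E) (j0 : N) (xp : N → K)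

lemma isProbWeights_p (x : K) : IsProbWeights fun e => M.p e x := by
  obtain ⟨j, hj⟩ := Set.mem_iUnion.1 (M.Kset_cover.symm ▸ Set.mem_univ x)
  have hsupp : Function.support (fun e => ENNReal.ofReal (M.p e x)) ⊆ {e | M.i e = j} :=
    fun e he => by_contra fun hne => he <| by
      change ENNReal.ofReal (M.p e x) = 0
      rw [M.p_zero_outside e x fun hx => Set.disjoint_left.1 (M.Kset_disjoint hne) hx hj,
        ENNReal.ofReal_zero]
  have hsum : ∑' e : ↑{e | M.i e = j}, M.p e x = 1 := M.p_tsum_one j x hj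
  refine ⟨fun e => M.p_nonneg e x, ?_⟩
  rw [← tsum_subtype_eq_of_support_subset hsupp, ← ENNReal.ofReal_tsum_of_nonneg
    (fun e => M.p_nonneg _ x) (by by_contra h; simp [tsum_eq_zero_of_not_summable h] at hsum)]
  exact hsum ▸ ENNReal.ofReal_one

lemma iterW_congr {σ τ : CodeSpace E} :
    ∀ {n : ℕ}, (∀ k ≤ n, σ (-k) = τ (-k)) → M.iterW σ n = M.iterW τ n
  | 0, h => by
    funext y
    simpa [iterW] using congrArg (M.wext · y) (h 0 le_rfl)
  | n + 1, h => by
    funext y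
    have hn := h (n + 1) le_rfl
    push_cast at hn
    simp only [iterW, hn, iterW_congr fun k hk => h k (hk.trans n.le_succ)]

lemma dependsOn_orbit (n : ℕ) :
    DependsOn (fun σ => M.orbit j0 xp σ n) (Set.Icc (-n : ℤ) 0) := fun σ τ h => by
  have h' : ∀ k ≤ n, σ (-k) = τ (-k) := fun k hk => h _ ⟨by omega, by omega⟩
  simp only [orbit, M.iterW_congr h', h' n le_rfl]

lemma negEnergy_of_mem_codeDomain {σ : CodeSpace E} (h : σ ∈ M.codeDomain j0 xp) :
    M.negEnergy j0 xp σ = (σ 1).elim ⊤ fun e => ennNegLog (M.p e (M.code j0 xp σ)) := by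
  rw [negEnergy, if_pos h]
  rfl

lemma tendsto_orbit_code {σ : CodeSpace E} (h : σ ∈ M.codeDomain j0 xp) :
    Tendsto (fun n => M.orbit j0 xp σ n) atTop (𝓝 (M.code j0 xp σ)) := by
  rw [code, dif_pos h]
  exact h.2.choose_spec

lemma measure_coord_one_eq_none_eq_zero {Λ : Measure (CodeSpace E)}
    (hD : ∀ᵐ σ ∂Λ, σ ∈ M.codeDomain j0 xp) :
    Λ {τ | τ 1 = none} = 0 := by
  refine measure_mono_null ?_ (ae_iff.1 hD)
  intro σ hσ hσD
  obtain ⟨e, -, he, -⟩ := hσD.1 1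
  exact Option.some_ne_none e (he.symm.trans hσ)

variable [Countable E]

lemma measurable_orbit (n : ℕ) : Measurable[pastAlgebra E] fun σ => M.orbit j0 xp σ n :=
  measurable_pastAlgebra_of_dependsOn (Set.finite_Icc _ _) Set.Icc_subset_Iic_self
    (M.dependsOn_orbit j0 xp n)

lemma measurable_dist_orbit (n n' : ℕ) :
    Measurable[pastAlgebra E] fun σ => dist (M.orbit j0 xp σ n) (M.orbit j0 xp σ n') :=
  measurable_pastAlgebra_of_dependsOn (Set.finite_Icc (-(max n n' : ℕ) : ℤ) 0)
    Set.Icc_subset_Iic_self fun σ τ h => congrArg₂ dist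
      ((M.dependsOn_orbit j0 xp n).mono (Set.Icc_subset_Icc (by omega) le_rfl) h)
      ((M.dependsOn_orbit j0 xp n').mono (Set.Icc_subset_Icc (by omega) le_rfl) h)

lemma measurableSet_exists_tendsto_orbit [CompleteSpace K] :
    MeasurableSet[pastAlgebra E] {σ | ∃ l, Tendsto (fun n => M.orbit j0 xp σ n) atTop (𝓝 l)} := by
  have hcauchy : {σ | ∃ l, Tendsto (fun n => M.orbit j0 xp σ n) atTop (𝓝 l)}
      = ⋂ k : ℕ, ⋃ n₀ : ℕ, ⋂ n ≥ n₀,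
          {σ | dist (M.orbit j0 xp σ n) (M.orbit j0 xp σ n₀) < 1 / (k + 1)} := by
    ext σ
    simp only [Set.mem_ofPred_eq, Set.mem_iInter, Set.mem_iUnion]
    constructor
    · rintro ⟨l, hl⟩ k
      exact Metric.cauchySeq_iff'.1 hl.cauchySeq _ (by positivity)
    · intro h
      refine cauchySeq_tendsto_of_complete (Metric.cauchySeq_iff'.2 fun ε hε => ?_)
      obtain ⟨k, hk⟩ := exists_nat_one_div_lt hε
      obtain ⟨n₀, hn₀⟩ := h k
      exact ⟨n₀, fun n hn => (hn₀ n hn).trans hk⟩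
  rw [hcauchy]
  exact .iInter fun k => .iUnion fun n₀ => .iInter fun n => .iInter fun _ =>
    M.measurable_dist_orbit j0 xp n n₀ measurableSet_Iio

lemma measurableSet_pathSpace : MeasurableSet M.pathSpace := by
  have : M.pathSpace = ⋂ n : ℤ, ⋃ (e : E) (e' : E) (_ : M.i e' = M.t e),
      {σ : CodeSpace E | σ n = some e} ∩ {σ | σ (n + 1) = some e'} := by
    ext σ
    simp [pathSpace, and_comm]
  rw [this]
  exact .iInter fun n => .iUnion fun e => .iUnion fun e' => .iUnion fun _ =>
    ((measurableSet_singleton _).preimage (measurable_pi_apply n)).inter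
      ((measurableSet_singleton _).preimage (measurable_pi_apply (n + 1)))

lemma measurableSet_codeDomain [CompleteSpace K] : MeasurableSet (M.codeDomain j0 xp) :=
  M.measurableSet_pathSpace.inter (pastAlgebra_le _ (M.measurableSet_exists_tendsto_orbit j0 xp))

theorem exists_measurable_pastAlgebra_ae_eq_code [CompleteSpace K] [BorelSpace K]
    {Λ : Measure (CodeSpace E)} (hD : ∀ᵐ σ ∂Λ, σ ∈ M.codeDomain j0 xp) :
    ∃ G : CodeSpace E → K, Measurable[pastAlgebra E] G ∧ M.code j0 xp =ᵐ[Λ] G := by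
  have hconv : ∀ᵐ σ ∂Λ.trim pastAlgebra_le,
      ∃ l, Tendsto (fun n => M.orbit j0 xp σ n) atTop (𝓝 l) := by
    rw [ae_iff]
    refine (trim_measurableSet_eq _ (M.measurableSet_exists_tendsto_orbit j0 xp).compl).trans ?_
    have hDc : Λ {σ | σ ∉ M.codeDomain j0 xp} = 0 := ae_iff.1 hD
    refine measure_mono_null ?_ hDc
    intro σ hσ hσD
    exact hσ hσD.2
  obtain ⟨G, hG, hGlim⟩ := @measurable_limit_of_tendsto_metrizable_ae _ _ (pastAlgebra E) _ _ _ _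
    _ _ _ _ _ _ (fun n => (M.measurable_orbit j0 xp n).aemeasurable) hconv
  refine ⟨G, hG, ?_⟩
  filter_upwards [hD, ae_of_ae_trim _ hGlim] with σ hσ hσG
  exact tendsto_nhds_unique (M.tendsto_orbit_code j0 xp hσ) hσG

variable {Λ : Measure (CodeSpace E)}

lemma lintegral_negEnergy_eq_top [CompleteSpace K] [IsProbabilityMeasure Λ]
    (hD : Λ (M.codeDomain j0 xp) ≠ 1) : ∫⁻ σ, M.negEnergy j0 xp σ ∂Λ = ⊤ := by
  have hDm := M.measurableSet_codeDomain j0 xp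
  have hDc : Λ (M.codeDomain j0 xp)ᶜ ≠ 0 := fun h => hD ((prob_compl_eq_zero_iff hDm).1 h)
  refine top_le_iff.1 ?_
  calc ⊤ = ∫⁻ _ in (M.codeDomain j0 xp)ᶜ, ⊤ ∂Λ := by rw [setLIntegral_const, ENNReal.top_mul hDc]
    _ ≤ ∫⁻ σ in (M.codeDomain j0 xp)ᶜ, M.negEnergy j0 xp σ ∂Λ :=
      setLIntegral_mono' hDm.compl fun σ hσ => by rw [negEnergy, if_neg hσ]
    _ ≤ ∫⁻ σ, M.negEnergy j0 xp σ ∂Λ := setLIntegral_le_lintegral _ _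

theorem lintegral_negEnergy_eq_lintegral_discreteCrossEntropy [IsFiniteMeasure Λ]
    (hD : ∀ᵐ σ ∂Λ, σ ∈ M.codeDomain j0 xp) {G : CodeSpace E → K}
    (hG : Measurable[pastAlgebra E] G) (hFG : M.code j0 xp =ᵐ[Λ] G) :
    ∫⁻ σ, M.negEnergy j0 xp σ ∂Λ = ∫⁻ σ, discreteCrossEntropy
      (fun e : E => pastCondProb Λ (some e) σ) (fun e => M.p e (G σ)) ∂Λ := by
  have hG' : ∀ e, Measurable[pastAlgebra E] fun σ => ennNegLog (M.p e (G σ)) := fun e =>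
    measurable_ennNegLog.comp ((M.p_measurable e).comp hG)
  have hpt : M.negEnergy j0 xp =ᵐ[Λ] fun σ => ∑' e : E,
      {τ : CodeSpace E | τ 1 = some e}.indicator (fun τ => ennNegLog (M.p e (G τ))) σ := by
    filter_upwards [hD, hFG] with σ hσ hσG
    obtain ⟨e, -, he, -, -⟩ := hσ.1 1
    rw [M.negEnergy_of_mem_codeDomain j0 xp hσ, he, hσG,
      tsum_eq_single e fun e' he' => Set.indicator_of_notMem (by simp [he, Ne.symm he']) _,
      Set.indicator_of_mem (by simpa using he)]
    rfl
  simp only [discreteCrossEntropy]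
  rw [lintegral_congr_ae hpt, lintegral_tsum fun e =>
      (((hG' e).mono pastAlgebra_le le_rfl).indicator (measurableSet_coord_one_eq _)).aemeasurable,
    lintegral_tsum (f := fun e σ => ENNReal.ofReal (pastCondProb Λ (some e) σ) *
      ennNegLog (M.p e (G σ))) fun e => ((measurable_pastCondProb _).ennreal_ofReal.mul
        ((hG' e).mono pastAlgebra_le le_rfl)).aemeasurable]
  refine tsum_congr fun e => ?_
  rw [lintegral_indicator (measurableSet_coord_one_eq _), setLIntegral_eq_lintegral_ofReal_condExp_mul
    pastAlgebra_le (measurableSet_coord_one_eq _) (hG' e)]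
  rfl

theorem isEquilibrium_iff_ae_pastCondProb_eq (hprob : IsProbabilityMeasure Λ)
    (hinv : Measure.map (shiftMap E) Λ = Λ) (hD : Λ (M.codeDomain j0 xp) = 1)
    {G : CodeSpace E → K} (hFG : M.code j0 xp =ᵐ[Λ] G) :
    M.IsEquilibrium j0 xp Λ ↔
      ∀ᵐ σ ∂Λ, (fun e : E => pastCondProb Λ (some e) σ) = fun e => M.p e (G σ) := by
  simp only [funext_iff]
  rw [ae_all_iff]
  have hpG : ∀ e, (fun σ => M.p e (M.code j0 xp σ)) =ᵐ[Λ] fun σ => M.p e (G σ) := fun e =>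
    hFG.fun_comp (M.p e)
  constructor
  · rintro ⟨-, -, -, h⟩ e
    exact (h e).trans (hpG e)
  · intro h
    exact ⟨hprob, hinv, hD, fun e => EventuallyEq.trans (h e) (hpG e).symm⟩

end MarkovSystem

variable {K : Type*} [MetricSpace K] [CompleteSpace K] [MeasurableSpace K] [BorelSpace K]
  {N E : Type*} [Countable N] [Countable E]

theorem entropy_le_lintegral_negEnergy_iff_equilibrium_general
    (M : MarkovSystem K N E) (j0 : N) (xp : N → K)
    (Λ : Measure (CodeSpace E)) (hprob : IsProbabilityMeasure Λ)
    (hinv : Measure.map (shiftMap E) Λ = Λ) (hfin : entropyS Λ ≠ ⊤) :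
    entropyS Λ ≤ ∫⁻ σ, M.negEnergy j0 xp σ ∂Λ ∧
      (entropyS Λ = ∫⁻ σ, M.negEnergy j0 xp σ ∂Λ ↔ M.IsEquilibrium j0 xp Λ) := by
  by_cases hD : Λ (M.codeDomain j0 xp) = 1
  · have hDae : ∀ᵐ σ ∂Λ, σ ∈ M.codeDomain j0 xp :=
      (mem_ae_iff_prob_eq_one (M.measurableSet_codeDomain j0 xp)).2 hD
    obtain ⟨G, hG, hFG⟩ := M.exists_measurable_pastAlgebra_ae_eq_code j0 xp hDae
    have hnone := M.measure_coord_one_eq_none_eq_zero j0 xp hDae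
    have ha := ae_isProbWeights_pastCondProb hnone
    have hb : ∀ᵐ σ ∂Λ, IsProbWeights fun e => M.p e (G σ) :=
      .of_forall fun σ => M.isProbWeights_p (G σ)
    rw [entropyS_eq_lintegral_discreteEntropy hnone] at hfin ⊢
    rw [M.lintegral_negEnergy_eq_lintegral_discreteCrossEntropy j0 xp hDae hG hFG,
      M.isEquilibrium_iff_ae_pastCondProb_eq j0 xp hprob hinv hD hFG]
    exact ⟨lintegral_discreteEntropy_le ha hb, lintegral_discreteEntropy_eq_iff ha hb
      (fun _ => measurable_pastCondProb _)
      (fun e => (M.p_measurable e).comp (hG.mono pastAlgebra_le le_rfl)) hfin⟩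
  · have htop := M.lintegral_negEnergy_eq_top j0 xp hD
    exact ⟨htop ▸ le_top, fun h => absurd (h.trans htop) hfin, fun h => absurd h.2.2.1 hD⟩

/-- Let `Λ ∈ P_S(Σ̄)` with `h_S(Λ) < ∞`. Then `h_S(Λ) + ∫ u dΛ ≤ 0`
(equivalently `h_S(Λ) ≤ ∫ (-u) dΛ`), with equality if and only if `Λ ∈ E(M)`. -/
theorem entropy_le_lintegral_negEnergy_iff_equilibrium
    (M : MarkovSystem K N E) (j0 : N) (xp : N → K) (hxp : ∀ j, xp j ∈ M.Kset j)
    (Λ : Measure (CodeSpace E)) (hprob : IsProbabilityMeasure Λ)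
    (hinv : Measure.map (shiftMap E) Λ = Λ) (hfin : entropyS Λ ≠ ⊤) :
    entropyS Λ ≤ ∫⁻ σ, M.negEnergy j0 xp σ ∂Λ ∧
      (entropyS Λ = ∫⁻ σ, M.negEnergy j0 xp σ ∂Λ ↔ M.IsEquilibrium j0 xp Λ) :=
  entropy_le_lintegral_negEnergy_iff_equilibrium_general M j0 xp Λ hprob hinv hfin
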